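/- Define, for real x ≥ 1 and λ = √3, G(x) = 1 / ( x² · ( √( ((2+λ)(λ/x+1)+1)² + 3 ) − λ )² ). Then G is strictly decreasing on [1, ∞); equivalently, for all real 1 ≤ x < y, G(y) < G(x). -/
import Mathlib


noncomputable section

/-- λ = √3 -/
def lam : ℝ := Real.sqrt 3

/-- G(x) = 1 / ( x² · ( √( ((2+λ)(λ/x+1)+1)² + 3 ) − λ )² ). -/
def Gfun (x : ℝ) : ℝ :=
  1 / (x ^ 2 * (Real.sqrt (((2 + lam) * (lam / x + 1) + 1) ^ 2 + 3) - lam) ^ 2)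

lemma lam_sq : lam ^ 2 = 3 := Real.sq_sqrt (by norm_num)

lemma lam_pos : 0 < lam := Real.sqrt_pos.mpr (by norm_num)

/-- auxiliary polynomial: P t = x²·(f(x)²+3) with x·f(x) = (3+λ)x + (2λ+3). -/
def Paux (t : ℝ) : ℝ := ((3 + lam) * t + (2 * lam + 3)) ^ 2 + 3 * t ^ 2

lemma Paux_nonneg (t : ℝ) : 0 ≤ Paux t := by unfold Paux; positivity

lemma key (t : ℝ) (ht : 1 ≤ t) :
    lam * Real.sqrt (Paux t) < (15 + 6 * lam) * t + (3 + lam) * (2 * lam + 3) := by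
  have h1 : lam * Real.sqrt (Paux t) = Real.sqrt (3 * Paux t) := by
    rw [Real.sqrt_mul (by norm_num : (0:ℝ) ≤ 3)]; rfl
  rw [h1, Real.sqrt_lt' (by nlinarith [lam_pos])]
  unfold Paux
  have e1 : lam ^ 2 * t ^ 2 = 3 * t ^ 2 := by rw [lam_sq]
  have e2 : lam ^ 2 * t = 3 * t := by rw [lam_sq]
  nlinarith [lam_sq, lam_pos, ht, e1, e2,
    mul_pos lam_pos (lt_of_lt_of_le one_pos ht), sq_nonneg t]

/-- x·(√(...) − λ) = √(Paux x) − λ x. -/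
lemma Dval (x : ℝ) (hx : 1 ≤ x) :
    x * (Real.sqrt (((2 + lam) * (lam / x + 1) + 1) ^ 2 + 3) - lam)
      = Real.sqrt (Paux x) - lam * x := by
  have hx0 : (0:ℝ) < x := lt_of_lt_of_le one_pos hx
  have h : Paux x = x ^ 2 * (((2 + lam) * (lam / x + 1) + 1) ^ 2 + 3) := by
    have hx0' : x ≠ 0 := ne_of_gt hx0
    unfold Paux; field_simp
    linear_combination (-(2 * (3 + lam) * x + 4 * lam + 3 + lam ^ 2)) * lam_sq
  rw [h, Real.sqrt_mul (sq_nonneg x), Real.sqrt_sq hx0.le]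
  ring

lemma D_pos (x : ℝ) (hx : 1 ≤ x) : 0 < Real.sqrt (Paux x) - lam * x := by
  have hx0 : (0:ℝ) < x := lt_of_lt_of_le one_pos hx
  have : lam * x < Real.sqrt (Paux x) := by
    rw [show lam * x = x * lam by ring]
    apply Real.lt_sqrt_of_sq_lt
    unfold Paux
    nlinarith [lam_sq, lam_pos, sq_nonneg ((3 + lam) * x + (2 * lam + 3))]
  linarith

lemma D_mono {x y : ℝ} (hx : 1 ≤ x) (hxy : x < y) :
    Real.sqrt (Paux x) - lam * x < Real.sqrt (Paux y) - lam * y := by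
  have hy : 1 ≤ y := le_of_lt (lt_of_le_of_lt hx hxy)
  have hkx := key x hx
  have hSx : Real.sqrt (Paux x) ^ 2 = Paux x := Real.sq_sqrt (Paux_nonneg x)
  have hSx0 : 0 ≤ Real.sqrt (Paux x) := Real.sqrt_nonneg _
  have h : Real.sqrt (Paux x) + lam * (y - x) < Real.sqrt (Paux y) := by
    apply Real.lt_sqrt_of_sq_lt
    have hexp : (Real.sqrt (Paux x) + lam * (y - x)) ^ 2
        = Paux x + 2 * lam * (y - x) * Real.sqrt (Paux x) + 3 * (y - x) ^ 2 := by
      rw [add_sq, hSx]; nlinarith [lam_sq]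
    rw [hexp]
    unfold Paux
    have h2 : 2 * lam * (y - x) * Real.sqrt (Paux x)
        < 2 * (y - x) * ((15 + 6 * lam) * x + (3 + lam) * (2 * lam + 3)) := by
      have hyx : 0 < y - x := by linarith
      nlinarith [hkx]
    unfold Paux at h2
    nlinarith [lam_sq, lam_pos]
  linarith

/-- G is strictly decreasing on [1, ∞). -/
theorem Gfun_strictAntiOn : StrictAntiOn Gfun (Set.Ici (1 : ℝ)) := by
  intro x hx y hy hxy
  simp only [Set.mem_Ici] at hx hy
  have hDx := D_pos x hx
  have hDy := D_pos y hy
  have hmono := D_mono hx hxy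
  have hGx : Gfun x = 1 / (Real.sqrt (Paux x) - lam * x) ^ 2 := by
    unfold Gfun
    rw [← Dval x hx]; ring_nf
  have hGy : Gfun y = 1 / (Real.sqrt (Paux y) - lam * y) ^ 2 := by
    unfold Gfun
    rw [← Dval y hy]; ring_nf
  rw [hGx, hGy]
  apply one_div_lt_one_div_of_lt (by positivity)
  nlinarith

end
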